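/- The clairvoyant best-case cost is monotonically non-increasing in the planning horizon: the minimum eigenvalue of 𝐂_T is greater than or equal to the minimum eigenvalue of 𝐂_{T+1}. (Corollary 1, second part.) -/

import Mathlib

/-!
Delaying the disturbance sequence `δ` by one step (zero initial state, then `δ`) and the input
sequence `u` by one step (zero first input) shifts the whole state trajectory by one step, so the
horizon-`(T+1)` cost of the delayed pair equals the horizon-`T` cost of `(u, δ)`. Completing the
square in `u` shows that `δᵀ𝐂_Lδ` is the minimum over `u` of the cost `J_L(u, δ)`. For a unit
eigenvector `δ` of `λ_min(𝐂_T)` and the optimal input `u` for it, this gives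
`λ_min(𝐂_{T+1}) ≤ (delay δ)ᵀ𝐂_{T+1}(delay δ) ≤ J_{T+1}(delay u, delay δ) = J_T(u, δ) = λ_min(𝐂_T)`.
-/

open Matrix

noncomputable section

/-- Index type for stacked state / disturbance trajectories over horizon `T`:
block index in `Fin (T+1)`, coordinate in `Fin n`. -/
abbrev SIdx (n T : ℕ) := Fin (T + 1) × Fin n

/-- Index type for stacked input trajectories over horizon `T`. -/
abbrev UIdx (m T : ℕ) := Fin T × Fin m

/-- The block-downshift operator `𝐙`. -/
def Zshift (n T : ℕ) : Matrix (SIdx n T) (SIdx n T) ℝ :=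
  Matrix.of fun p q => if (p.1 : ℕ) = (q.1 : ℕ) + 1 ∧ p.2 = q.2 then (1 : ℝ) else 0

/-- `𝐀 = I_{T+1} ⊗ A`. -/
def bigA (n T : ℕ) (A : Matrix (Fin n) (Fin n) ℝ) : Matrix (SIdx n T) (SIdx n T) ℝ :=
  Matrix.of fun p q => if p.1 = q.1 then A p.2 q.2 else 0

/-- `𝐁 = col(I_T ⊗ B, 0)`. -/
def bigB (n m T : ℕ) (B : Matrix (Fin n) (Fin m) ℝ) : Matrix (SIdx n T) (UIdx m T) ℝ :=
  Matrix.of fun p q => if (p.1 : ℕ) = (q.1 : ℕ) then B p.2 q.2 else 0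

/-- `𝐐 = blkdiag(I_T ⊗ Q, 0)`. -/
def bigQ (n T : ℕ) (Q : Matrix (Fin n) (Fin n) ℝ) : Matrix (SIdx n T) (SIdx n T) ℝ :=
  Matrix.of fun p q => if p.1 = q.1 ∧ (p.1 : ℕ) < T then Q p.2 q.2 else 0

/-- `𝐑 = I_T ⊗ R`. -/
def bigR (m T : ℕ) (R : Matrix (Fin m) (Fin m) ℝ) : Matrix (UIdx m T) (UIdx m T) ℝ :=
  Matrix.of fun p q => if p.1 = q.1 then R p.2 q.2 else 0

/-- `𝐅 = (I − 𝐙𝐀)⁻¹𝐙𝐁`. -/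
def bigF (n m T : ℕ) (A : Matrix (Fin n) (Fin n) ℝ) (B : Matrix (Fin n) (Fin m) ℝ) :
    Matrix (SIdx n T) (UIdx m T) ℝ :=
  (1 - Zshift n T * bigA n T A)⁻¹ * (Zshift n T * bigB n m T B)

/-- `𝐆 = (I − 𝐙𝐀)⁻¹`. -/
def bigG (n T : ℕ) (A : Matrix (Fin n) (Fin n) ℝ) : Matrix (SIdx n T) (SIdx n T) ℝ :=
  (1 - Zshift n T * bigA n T A)⁻¹

/-- The control cost `J_T(u, δ) = xᵀ𝐐x + uᵀ𝐑u` with `x = 𝐅u + 𝐆δ`. -/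
def costJ (n m T : ℕ) (A : Matrix (Fin n) (Fin n) ℝ) (B : Matrix (Fin n) (Fin m) ℝ)
    (Q : Matrix (Fin n) (Fin n) ℝ) (R : Matrix (Fin m) (Fin m) ℝ)
    (u : UIdx m T → ℝ) (δ : SIdx n T → ℝ) : ℝ :=
  let x := bigF n m T A B *ᵥ u + bigG n T A *ᵥ δ
  x ⬝ᵥ (bigQ n T Q *ᵥ x) + u ⬝ᵥ (bigR m T R *ᵥ u)

/-- `𝐏 = 𝐑 + 𝐅ᵀ𝐐𝐅`. -/
def bigP (n m T : ℕ) (A : Matrix (Fin n) (Fin n) ℝ) (B : Matrix (Fin n) (Fin m) ℝ)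
    (Q : Matrix (Fin n) (Fin n) ℝ) (R : Matrix (Fin m) (Fin m) ℝ) :
    Matrix (UIdx m T) (UIdx m T) ℝ :=
  bigR m T R + (bigF n m T A B)ᵀ * bigQ n T Q * bigF n m T A B

/-- The clairvoyant cost matrix `𝐂_T = 𝐆ᵀ𝐐(I + 𝐅𝐑⁻¹𝐅ᵀ𝐐)⁻¹𝐆`. -/
def Cmat (n m T : ℕ) (A : Matrix (Fin n) (Fin n) ℝ) (B : Matrix (Fin n) (Fin m) ℝ)
    (Q : Matrix (Fin n) (Fin n) ℝ) (R : Matrix (Fin m) (Fin m) ℝ) :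
    Matrix (SIdx n T) (SIdx n T) ℝ :=
  (bigG n T A)ᵀ * bigQ n T Q *
    (1 + bigF n m T A B * (bigR m T R)⁻¹ * (bigF n m T A B)ᵀ * bigQ n T Q)⁻¹ * bigG n T A

/-- Assemble `δ = col(x₀, w₀, …, w_{T−1})`. -/
def assemble (n T : ℕ) (x0 : Fin n → ℝ) (w : Fin T × Fin n → ℝ) : SIdx n T → ℝ :=
  fun p => if h : (p.1 : ℕ) = 0 then x0 p.2
    else w (⟨(p.1 : ℕ) - 1, by have := p.1.isLt; omega⟩, p.2)

open scoped MatrixOrder Kronecker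

section Rayleigh

variable {ι : Type*} [Fintype ι] [DecidableEq ι] {C : Matrix ι ι ℝ}

theorem Matrix.IsHermitian.iInf_eigenvalues_mul_dotProduct_le (hC : C.IsHermitian)
    (x : ι → ℝ) : (⨅ i, hC.eigenvalues i) * (x ⬝ᵥ x) ≤ x ⬝ᵥ (C *ᵥ x) := by
  have hle : algebraMap ℝ (Matrix ι ι ℝ) (⨅ i, hC.eigenvalues i) ≤ C := by
    rw [algebraMap_le_iff_le_spectrum hC.isSelfAdjoint, hC.spectrum_real_eq_range_eigenvalues]
    rintro _ ⟨i, rfl⟩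
    exact ciInf_le (Set.finite_range _).bddBelow i
  have := (Matrix.le_iff.mp hle).dotProduct_mulVec_nonneg x
  rw [star_trivial, Algebra.algebraMap_eq_smul_one, sub_mulVec, smul_mulVec, one_mulVec,
    dotProduct_sub, dotProduct_smul, smul_eq_mul] at this
  linarith

theorem Matrix.IsHermitian.exists_dotProduct_mulVec_eq_iInf_eigenvalues [Nonempty ι]
    (hC : C.IsHermitian) : ∃ x : ι → ℝ, x ⬝ᵥ x = 1 ∧ x ⬝ᵥ (C *ᵥ x) = ⨅ i, hC.eigenvalues i := by
  obtain ⟨i₀, hi₀⟩ := Finite.exists_min hC.eigenvalues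
  have hunit : ⇑(hC.eigenvectorBasis i₀) ⬝ᵥ ⇑(hC.eigenvectorBasis i₀) = 1 := by
    have h := real_inner_self_eq_norm_sq (hC.eigenvectorBasis i₀)
    rwa [EuclideanSpace.inner_eq_star_dotProduct, star_trivial,
      hC.eigenvectorBasis.orthonormal.1 i₀, one_pow] at h
  refine ⟨_, hunit, ?_⟩
  rw [hC.mulVec_eigenvectorBasis, dotProduct_smul, hunit, smul_eq_mul, mul_one]
  exact le_antisymm (le_ciInf hi₀) (ciInf_le (Set.finite_range _).bddBelow i₀)

end Rayleigh

section CompletingSquare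

variable {α ι κ ρ : Type*} [CommRing α] [Fintype ι] [Fintype κ]

lemma Matrix.mulVec_dotProduct_mulVec [Fintype ρ] (N : Matrix ι κ α) (M : Matrix ι ρ α)
    (x : κ → α) (y : ρ → α) : (N *ᵥ x) ⬝ᵥ (M *ᵥ y) = x ⬝ᵥ ((Nᵀ * M) *ᵥ y) := by
  rw [← mulVec_mulVec, dotProduct_mulVec x, vecMul_transpose]

lemma Matrix.add_dotProduct_mulVec_add {M : Matrix ι ι α} (hM : M.IsSymm) (x y : ι → α) :
    (x + y) ⬝ᵥ (M *ᵥ (x + y)) = x ⬝ᵥ (M *ᵥ x) + 2 * (x ⬝ᵥ (M *ᵥ y)) + y ⬝ᵥ (M *ᵥ y) := by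
  have hyx : y ⬝ᵥ (M *ᵥ x) = x ⬝ᵥ (M *ᵥ y) := by
    rw [dotProduct_mulVec, ← mulVec_transpose, hM.eq, dotProduct_comm]
  rw [mulVec_add, dotProduct_add, add_dotProduct, add_dotProduct, hyx]
  ring

def quadCost [Fintype ρ] (F : Matrix ι κ α) (G : Matrix ι ρ α) (Q : Matrix ι ι α)
    (R : Matrix κ κ α) (u : κ → α) (δ : ρ → α) : α :=
  (F *ᵥ u + G *ᵥ δ) ⬝ᵥ (Q *ᵥ (F *ᵥ u + G *ᵥ δ)) + u ⬝ᵥ (R *ᵥ u)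

variable [DecidableEq ι] [DecidableEq κ] (F : Matrix ι κ α) (G : Matrix ι ρ α)
  {Q : Matrix ι ι α} {R : Matrix κ κ α}

lemma Matrix.inv_one_add_mul_inv_mul_eq (hR : IsUnit R) (hP : IsUnit (R + Fᵀ * Q * F)) :
    (1 + F * R⁻¹ * Fᵀ * Q)⁻¹ = 1 - F * (R + Fᵀ * Q * F)⁻¹ * Fᵀ * Q := by
  have hR_inv : R⁻¹⁻¹ = R := nonsing_inv_nonsing_inv R ((isUnit_iff_isUnit_det R).mp hR)
  have h := add_mul_mul_inv_eq_sub 1 F R⁻¹ (Fᵀ * Q) isUnit_one (isUnit_nonsing_inv_iff.mpr hR)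
    (by rwa [hR_inv, inv_one, Matrix.mul_one])
  rw [hR_inv] at h
  simpa only [inv_one, Matrix.one_mul, Matrix.mul_one, Matrix.mul_assoc] using h

lemma Matrix.mul_inv_one_add_mul_inv_mul_eq_sub (hQ : Q.IsSymm) (hR : IsUnit R)
    (hP : IsUnit (R + Fᵀ * Q * F)) :
    Gᵀ * Q * (1 + F * R⁻¹ * Fᵀ * Q)⁻¹ * G
      = Gᵀ * Q * G - (Fᵀ * Q * G)ᵀ * (R + Fᵀ * Q * F)⁻¹ * (Fᵀ * Q * G) := by
  rw [inv_one_add_mul_inv_mul_eq F hR hP, transpose_mul, transpose_mul, transpose_transpose,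
    hQ.eq]
  simp only [Matrix.mul_sub, Matrix.sub_mul, Matrix.mul_one, Matrix.mul_assoc]

variable [Fintype ρ]

lemma quadCost_eq_add_sq (hQ : Q.IsSymm) (hR : R.IsSymm) (hR_unit : IsUnit R)
    (hP : IsUnit (R + Fᵀ * Q * F)) (u : κ → α) (δ : ρ → α) :
    quadCost F G Q R u δ
      = δ ⬝ᵥ ((Gᵀ * Q * (1 + F * R⁻¹ * Fᵀ * Q)⁻¹ * G) *ᵥ δ)
        + (u + ((R + Fᵀ * Q * F)⁻¹ * (Fᵀ * Q * G)) *ᵥ δ)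
          ⬝ᵥ ((R + Fᵀ * Q * F) *ᵥ (u + ((R + Fᵀ * Q * F)⁻¹ * (Fᵀ * Q * G)) *ᵥ δ)) := by
  have hcost : quadCost F G Q R u δ
      = u ⬝ᵥ ((R + Fᵀ * Q * F) *ᵥ u) + 2 * (u ⬝ᵥ ((Fᵀ * Q * G) *ᵥ δ))
        + δ ⬝ᵥ ((Gᵀ * Q * G) *ᵥ δ) := by
    rw [quadCost, add_dotProduct_mulVec_add hQ, mulVec_dotProduct_mulVec,
      mulVec_dotProduct_mulVec, mulVec_dotProduct_mulVec, add_mulVec, dotProduct_add]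
    simp only [mulVec_mulVec]
    ring
  rw [hcost, mul_inv_one_add_mul_inv_mul_eq_sub F G hQ hR_unit hP]
  set P := R + Fᵀ * Q * F with hP_def
  set K := Fᵀ * Q * G
  have hP_symm : P.IsSymm := by
    rw [hP_def, IsSymm, transpose_add, transpose_mul, transpose_mul, transpose_transpose, hQ.eq,
      hR.eq, Matrix.mul_assoc]
  have hPK : P *ᵥ ((P⁻¹ * K) *ᵥ δ) = K *ᵥ δ := by
    rw [mulVec_mulVec, ← Matrix.mul_assoc, mul_nonsing_inv _ ((isUnit_iff_isUnit_det P).mp hP),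
      Matrix.one_mul]
  rw [add_dotProduct_mulVec_add hP_symm, hPK, dotProduct_comm ((P⁻¹ * K) *ᵥ δ),
    mulVec_dotProduct_mulVec, sub_mulVec, dotProduct_sub, Matrix.mul_assoc Kᵀ]
  ring

end CompletingSquare

theorem isLeast_range_quadCost {ι κ ρ : Type*} [Fintype ι] [Fintype κ] [Fintype ρ]
    [DecidableEq ι] [DecidableEq κ] (F : Matrix ι κ ℝ) (G : Matrix ι ρ ℝ)
    {Q : Matrix ι ι ℝ} {R : Matrix κ κ ℝ} (hQ : Q.PosSemidef) (hR : R.PosDef) (δ : ρ → ℝ) :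
    IsLeast (Set.range fun u => quadCost F G Q R u δ)
      (δ ⬝ᵥ ((Gᵀ * Q * (1 + F * R⁻¹ * Fᵀ * Q)⁻¹ * G) *ᵥ δ)) := by
  have hP : (R + Fᵀ * Q * F).PosDef :=
    hR.add_posSemidef (by simpa using hQ.conjTranspose_mul_mul_same F)
  have hcost := quadCost_eq_add_sq F G (isHermitian_iff_isSymm.mp hQ.isHermitian)
    (isHermitian_iff_isSymm.mp hR.isHermitian) hR.isUnit hP.isUnit
  refine ⟨⟨-(((R + Fᵀ * Q * F)⁻¹ * (Fᵀ * Q * G)) *ᵥ δ), ?_⟩, ?_⟩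
  · simp only [hcost, neg_add_cancel, mulVec_zero, dotProduct_zero, add_zero]
  · rintro _ ⟨u, rfl⟩
    dsimp only
    rw [hcost]
    simpa using hP.posSemidef.dotProduct_mulVec_nonneg
      (u + ((R + Fᵀ * Q * F)⁻¹ * (Fᵀ * Q * G)) *ᵥ δ)

section Delay

variable {α ι : Type*} {L : ℕ}

/-- Applied to `δ = col(x₀, w₀, …)` this gives the disturbance `col(0, x₀, w₀, …)`, which drives
the zero state to `x₀` after one step. -/
def delay [Zero α] (v : Fin L × ι → α) : Fin (L + 1) × ι → α :=
  fun p => (Fin.cons 0 (Function.curry v) : Fin (L + 1) → ι → α) p.1 p.2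

@[simp] lemma delay_zero [Zero α] (v : Fin L × ι → α) (k : ι) : delay v (0, k) = 0 := rfl

@[simp] lemma delay_succ [Zero α] (v : Fin L × ι → α) (i : Fin L) (k : ι) :
    delay v (i.succ, k) = v (i, k) := rfl

lemma delay_add [AddZeroClass α] (v w : Fin L × ι → α) : delay (v + w) = delay v + delay w := by
  ext ⟨i, k⟩
  cases i using Fin.cases <;> simp

lemma delay_sub [SubtractionMonoid α] (v w : Fin L × ι → α) :
    delay (v - w) = delay v - delay w := by
  ext ⟨i, k⟩
  cases i using Fin.cases <;> simp

lemma delay_dotProduct_delay [Fintype ι] [NonUnitalNonAssocSemiring α] (v w : Fin L × ι → α) :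
    delay v ⬝ᵥ delay w = v ⬝ᵥ w := by
  simp [dotProduct, Fintype.sum_prod_type, Fin.sum_univ_succ]

lemma mulVec_delay_of_apply {L' : ℕ} {κ : Type*} [Fintype κ] [NonUnitalNonAssocSemiring α]
    {M' : Matrix (Fin (L' + 1) × ι) (Fin (L + 1) × κ) α} {M : Matrix (Fin L' × ι) (Fin L × κ) α}
    (h_zero : ∀ k j l, M' (0, k) (Fin.succ j, l) = 0)
    (h_succ : ∀ i k j l, M' (Fin.succ i, k) (Fin.succ j, l) = M (i, k) (j, l))
    (x : Fin L × κ → α) : M' *ᵥ delay x = delay (M *ᵥ x) := by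
  ext ⟨i, k⟩
  cases i using Fin.cases <;>
    simp [mulVec, dotProduct, Fintype.sum_prod_type, Fin.sum_univ_succ, h_zero, h_succ]

end Delay

section Horizon

variable {n m T : ℕ}

lemma Zshift_mulVec_delay (x : SIdx n T → ℝ) :
    Zshift n (T + 1) *ᵥ delay x = delay (Zshift n T *ᵥ x) :=
  mulVec_delay_of_apply (by simp [Zshift]) (by simp [Zshift]) x

lemma bigA_mulVec_delay (A : Matrix (Fin n) (Fin n) ℝ) (x : SIdx n T → ℝ) :
    bigA n (T + 1) A *ᵥ delay x = delay (bigA n T A *ᵥ x) :=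
  mulVec_delay_of_apply (by simp [bigA, fun j => (Fin.succ_ne_zero j).symm]) (by simp [bigA]) x

lemma bigB_mulVec_delay (B : Matrix (Fin n) (Fin m) ℝ) (u : UIdx m T → ℝ) :
    bigB n m (T + 1) B *ᵥ delay u = delay (bigB n m T B *ᵥ u) :=
  mulVec_delay_of_apply (by simp [bigB]) (by simp [bigB]) u

lemma bigQ_mulVec_delay (Q : Matrix (Fin n) (Fin n) ℝ) (x : SIdx n T → ℝ) :
    bigQ n (T + 1) Q *ᵥ delay x = delay (bigQ n T Q *ᵥ x) :=
  mulVec_delay_of_apply (by simp [bigQ, fun j => (Fin.succ_ne_zero j).symm]) (by simp [bigQ]) x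

lemma bigR_mulVec_delay (R : Matrix (Fin m) (Fin m) ℝ) (u : UIdx m T → ℝ) :
    bigR m (T + 1) R *ᵥ delay u = delay (bigR m T R *ᵥ u) :=
  mulVec_delay_of_apply (by simp [bigR, fun j => (Fin.succ_ne_zero j).symm]) (by simp [bigR]) u

lemma Zshift_mulVec_zero (y : SIdx n T → ℝ) (k : Fin n) : (Zshift n T *ᵥ y) (0, k) = 0 := by
  simp [Zshift, mulVec, dotProduct]

lemma Zshift_mulVec_succ (y : SIdx n T → ℝ) (i : Fin T) (k : Fin n) :
    (Zshift n T *ᵥ y) (i.succ, k) = y (i.castSucc, k) := by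
  rw [mulVec, dotProduct, Fintype.sum_eq_single (i.castSucc, k)]
  · simp [Zshift]
  · rintro ⟨j, l⟩ hjl
    have : ¬((i : ℕ) = j ∧ k = l) := fun h => hjl (Prod.ext (Fin.ext h.1.symm) h.2.symm)
    simp [Zshift, this]

lemma bigA_mulVec (A : Matrix (Fin n) (Fin n) ℝ) (x : SIdx n T → ℝ) (p : SIdx n T) :
    (bigA n T A *ᵥ x) p = (A *ᵥ fun l => x (p.1, l)) p.2 := by
  simp [bigA, mulVec, dotProduct, Fintype.sum_prod_type]

-- A vector fixed by `𝐙𝐀` vanishes block by block, so `1 - 𝐙𝐀` is injective.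
lemma isUnit_one_sub_Zshift_mul_bigA (A : Matrix (Fin n) (Fin n) ℝ) :
    IsUnit (1 - Zshift n T * bigA n T A) := by
  rw [← mulVec_injective_iff_isUnit]
  refine (injective_iff_map_eq_zero (mulVecLin (1 - Zshift n T * bigA n T A))).mpr fun x hx => ?_
  have hfix : x = Zshift n T *ᵥ (bigA n T A *ᵥ x) := by
    rwa [mulVecLin_apply, sub_mulVec, one_mulVec, sub_eq_zero, ← mulVec_mulVec] at hx
  ext ⟨i, k⟩
  induction i using Fin.induction generalizing k with
  | zero => rw [hfix, Zshift_mulVec_zero]; rfl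
  | succ i ih =>
    rw [hfix, Zshift_mulVec_succ, bigA_mulVec]
    simp only [ih, Pi.zero_apply]
    exact congrFun (mulVec_zero A) k

lemma one_sub_Zshift_mul_bigA_mulVec_delay (A : Matrix (Fin n) (Fin n) ℝ) (x : SIdx n T → ℝ) :
    (1 - Zshift n (T + 1) * bigA n (T + 1) A) *ᵥ delay x
      = delay ((1 - Zshift n T * bigA n T A) *ᵥ x) := by
  rw [sub_mulVec, sub_mulVec, one_mulVec, one_mulVec, ← mulVec_mulVec, ← mulVec_mulVec,
    bigA_mulVec_delay, Zshift_mulVec_delay, delay_sub]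

lemma bigG_mulVec_delay (A : Matrix (Fin n) (Fin n) ℝ) (x : SIdx n T → ℝ) :
    bigG n (T + 1) A *ᵥ delay x = delay (bigG n T A *ᵥ x) := by
  have hdet := (isUnit_iff_isUnit_det _).mp (isUnit_one_sub_Zshift_mul_bigA (T := T) A)
  have hdet' := (isUnit_iff_isUnit_det _).mp (isUnit_one_sub_Zshift_mul_bigA (T := T + 1) A)
  have hx : (1 - Zshift n T * bigA n T A) *ᵥ (bigG n T A *ᵥ x) = x := by
    rw [bigG, mulVec_mulVec, mul_nonsing_inv _ hdet, one_mulVec]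
  conv_lhs => rw [← hx, ← one_sub_Zshift_mul_bigA_mulVec_delay]
  rw [bigG, mulVec_mulVec, nonsing_inv_mul _ hdet', one_mulVec]

lemma bigF_mulVec_delay (A : Matrix (Fin n) (Fin n) ℝ) (B : Matrix (Fin n) (Fin m) ℝ)
    (u : UIdx m T → ℝ) : bigF n m (T + 1) A B *ᵥ delay u = delay (bigF n m T A B *ᵥ u) := by
  simp only [bigF, ← mulVec_mulVec, bigB_mulVec_delay, Zshift_mulVec_delay]
  exact bigG_mulVec_delay A _

lemma costJ_delay (A : Matrix (Fin n) (Fin n) ℝ) (B : Matrix (Fin n) (Fin m) ℝ)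
    (Q : Matrix (Fin n) (Fin n) ℝ) (R : Matrix (Fin m) (Fin m) ℝ) (u : UIdx m T → ℝ)
    (δ : SIdx n T → ℝ) :
    costJ n m (T + 1) A B Q R (delay u) (delay δ) = costJ n m T A B Q R u δ := by
  simp only [costJ, bigF_mulVec_delay, bigG_mulVec_delay, ← delay_add, bigQ_mulVec_delay,
    bigR_mulVec_delay, delay_dotProduct_delay]

lemma bigQ_eq_kronecker (Q : Matrix (Fin n) (Fin n) ℝ) :
    bigQ n T Q = diagonal (fun i : Fin (T + 1) => if (i : ℕ) < T then 1 else 0) ⊗ₖ Q := by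
  ext ⟨i, k⟩ ⟨j, l⟩
  by_cases hij : i = j <;> simp [bigQ, hij]

lemma bigR_eq_kronecker (R : Matrix (Fin m) (Fin m) ℝ) :
    bigR m T R = (1 : Matrix (Fin T) (Fin T) ℝ) ⊗ₖ R := by
  ext ⟨i, k⟩ ⟨j, l⟩
  by_cases hij : i = j <;> simp [bigR, hij]

lemma bigQ_posSemidef {Q : Matrix (Fin n) (Fin n) ℝ} (hQ : Q.PosSemidef) :
    (bigQ n T Q).PosSemidef := by
  rw [bigQ_eq_kronecker]
  exact (posSemidef_diagonal_iff.mpr fun i => by split_ifs <;> norm_num).kronecker hQ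

lemma bigR_posDef {R : Matrix (Fin m) (Fin m) ℝ} (hR : R.PosDef) : (bigR m T R).PosDef := by
  rw [bigR_eq_kronecker]
  exact PosDef.one.kronecker hR

theorem isLeast_costJ (A : Matrix (Fin n) (Fin n) ℝ) (B : Matrix (Fin n) (Fin m) ℝ)
    {Q : Matrix (Fin n) (Fin n) ℝ} {R : Matrix (Fin m) (Fin m) ℝ} (hQ : Q.PosSemidef)
    (hR : R.PosDef) (δ : SIdx n T → ℝ) :
    IsLeast (Set.range fun u => costJ n m T A B Q R u δ) (δ ⬝ᵥ (Cmat n m T A B Q R *ᵥ δ)) :=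
  isLeast_range_quadCost _ _ (bigQ_posSemidef hQ) (bigR_posDef hR) δ

end Horizon

theorem stmt9_general (n m T : ℕ) (hn : 0 < n)
    (A : Matrix (Fin n) (Fin n) ℝ) (B : Matrix (Fin n) (Fin m) ℝ)
    (Q : Matrix (Fin n) (Fin n) ℝ) (R : Matrix (Fin m) (Fin m) ℝ)
    (hQ : Q.PosSemidef) (hR : R.PosDef)
    (hCT : (Cmat n m T A B Q R).IsHermitian)
    (hCT1 : (Cmat n m (T + 1) A B Q R).IsHermitian) :
    (⨅ i : SIdx n (T + 1), hCT1.eigenvalues i) ≤ ⨅ i : SIdx n T, hCT.eigenvalues i := by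
  have : Nonempty (Fin n) := ⟨⟨0, hn⟩⟩
  obtain ⟨δ, hδ_unit, hδ_min⟩ := hCT.exists_dotProduct_mulVec_eq_iInf_eigenvalues
  obtain ⟨u, hu⟩ := (isLeast_costJ A B hQ hR δ).1
  calc (⨅ i, hCT1.eigenvalues i)
      = (⨅ i, hCT1.eigenvalues i) * (delay δ ⬝ᵥ delay δ) := by
        rw [delay_dotProduct_delay, hδ_unit, mul_one]
    _ ≤ delay δ ⬝ᵥ (Cmat n m (T + 1) A B Q R *ᵥ delay δ) :=
        hCT1.iInf_eigenvalues_mul_dotProduct_le _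
    _ ≤ costJ n m (T + 1) A B Q R (delay u) (delay δ) :=
        (isLeast_costJ A B hQ hR _).2 ⟨_, rfl⟩
    _ = ⨅ i, hCT.eigenvalues i := by rw [costJ_delay]; exact hu.trans hδ_min

/-- Corollary 1, second part: the minimum eigenvalue of `𝐂_T` is monotonically
non-increasing in the planning horizon. -/
theorem stmt9 (n m T : ℕ) (hn : 0 < n) (hm : 0 < m) (hT : 1 ≤ T)
    (A : Matrix (Fin n) (Fin n) ℝ) (B : Matrix (Fin n) (Fin m) ℝ)
    (Q : Matrix (Fin n) (Fin n) ℝ) (R : Matrix (Fin m) (Fin m) ℝ)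
    (hQ : Q.PosSemidef) (hR : R.PosDef)
    (hCT : (Cmat n m T A B Q R).IsHermitian)
    (hCT1 : (Cmat n m (T + 1) A B Q R).IsHermitian) :
    (⨅ i : SIdx n (T + 1), hCT1.eigenvalues i) ≤ ⨅ i : SIdx n T, hCT.eigenvalues i :=
  stmt9_general n m T hn A B Q R hQ hR hCT hCT1

end
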